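/- Let f(t) = t^(1/p) for p ≥ 1. For every t₀ > 0 and all t ≥ 0, f(t) ≥ f(t₀) + f'(t₀)(t - t₀) + p f''(t₀)(t - t₀)². -/

import Mathlib

private lemma rpow_key (α : ℝ) (hα0 : 0 < α) (hα1 : α ≤ 1)
    (t₀ : ℝ) (ht₀ : 0 < t₀) (t : ℝ) (ht : 0 ≤ t) :
    t₀ ^ α + α * t₀ ^ (α - 1) * (t - t₀) + (α - 1) * t₀ ^ (α - 2) * (t - t₀) ^ 2
      ≤ t ^ α := by
  have h1 : t₀ ^ (α - 1) = t₀ ^ (α - 2) * t₀ := by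
    rw [show α - 1 = (α - 2) + 1 by ring, Real.rpow_add ht₀, Real.rpow_one]
  have h2 : t₀ ^ α = t₀ ^ (α - 2) * t₀ ^ 2 := by
    rw [show α = (α - 2) + 2 by ring, Real.rpow_add ht₀]
    norm_num
  have hLHS : t₀ ^ α + α * t₀ ^ (α - 1) * (t - t₀) + (α - 1) * t₀ ^ (α - 2) * (t - t₀) ^ 2
      = t₀ ^ (α - 2) * (t * ((α - 1) * t + (2 - α) * t₀)) := by
    rw [h1, h2]; ring
  rw [hLHS]
  have htpos : (0:ℝ) ≤ t₀ ^ (α - 2) := (Real.rpow_pos_of_pos ht₀ _).le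
  rcases eq_or_lt_of_le ht with rfl | ht'
  · rw [Real.zero_rpow hα0.ne']
    simp
  set S : ℝ := (α - 1) * t + (2 - α) * t₀ with hS
  rcases le_or_gt S 0 with hSle | hSpos
  · have : t₀ ^ (α - 2) * (t * S) ≤ 0 :=
      mul_nonpos_of_nonneg_of_nonpos htpos (mul_nonpos_of_nonneg_of_nonpos ht hSle)
    exact this.trans (Real.rpow_nonneg ht α)
  · -- Bernoulli route
    set β : ℝ := 1 - α with hβ
    have hβ0 : 0 ≤ β := by linarith
    have hβ1 : β ≤ 1 := by linarith
    set s : ℝ := (t - t₀) / t₀ with hs_def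
    have hs : -1 ≤ s := by
      rw [hs_def, le_div_iff₀ ht₀]; linarith
    have h1s : 1 + s = t / t₀ := by rw [hs_def]; field_simp; ring
    have hB : (t / t₀) ^ β ≤ 1 + β * s := by
      rw [← h1s]
      exact rpow_one_add_le_one_add_mul_self hs hβ0 hβ1
    set A : ℝ := (t / t₀) ^ β with hA
    have hA0 : 0 ≤ A := Real.rpow_nonneg (by positivity) _
    have hSdiv : S / t₀ = 1 - β * s := by
      rw [hS, hβ, hs_def]; field_simp; ring
    have hSd0 : 0 < 1 - β * s := by
      rw [← hSdiv]; positivity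
    -- multiplicative inequality
    have hmul : t * (S / t₀) * A ≤ t := by
      rw [hSdiv]
      nlinarith [mul_le_mul_of_nonneg_left hB (mul_nonneg ht'.le hSd0.le), sq_nonneg (β * s),
        mul_pos ht' hSd0]
    -- convert goal by multiplying by t ^ β > 0
    have htβ : (0:ℝ) < t ^ β := Real.rpow_pos_of_pos ht' β
    rw [← mul_le_mul_iff_of_pos_right htβ]
    have e2 : t ^ α * t ^ β = t := by
      rw [← Real.rpow_add ht', hβ]
      norm_num
    have e1 : t₀ ^ (α - 2) * (t * S) * t ^ β = t * (S / t₀) * A := by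
      have hd : A = t ^ β / t₀ ^ β := Real.div_rpow ht ht₀.le β
      have ht₀β : (0:ℝ) < t₀ ^ β := Real.rpow_pos_of_pos ht₀ β
      have h3 : t₀ ^ (α - 2) * t₀ ^ β * t₀ = 1 := by
        rw [← Real.rpow_add ht₀, hβ]
        rw [show α - 2 + (1 - α) = -1 by ring, Real.rpow_neg_one]
        field_simp
      rw [hd]
      field_simp
      linear_combination h3
    rw [e1, e2]
    exact hmul

/-- For `f(t) = t^(1/p)` with real `p ≥ 1`: for every `t₀ > 0` and all `t ≥ 0`,
`f(t) ≥ f(t₀) + f'(t₀)(t - t₀) + p f''(t₀)(t - t₀)²`, where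
`f'(t₀) = (1/p) t₀^(1/p - 1)` and `f''(t₀) = (1/p)(1/p - 1) t₀^(1/p - 2)`. -/
theorem rpow_inv_second_order_lower_bound (p : ℝ) (hp : 1 ≤ p) :
    ∀ t₀ : ℝ, 0 < t₀ → ∀ t : ℝ, 0 ≤ t →
      t₀ ^ (1 / p) + 1 / p * t₀ ^ (1 / p - 1) * (t - t₀)
          + p * (1 / p * (1 / p - 1) * t₀ ^ (1 / p - 2)) * (t - t₀) ^ 2
        ≤ t ^ (1 / p) := by
  intro t₀ ht₀ t ht
  have hp0 : p ≠ 0 := by positivity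
  have hα0 : 0 < 1 / p := by positivity
  have hα1 : 1 / p ≤ 1 := by
    rw [div_le_one (by positivity)]; exact hp
  have hcoef : p * (1 / p * (1 / p - 1) * t₀ ^ (1 / p - 2))
      = (1 / p - 1) * t₀ ^ (1 / p - 2) := by
    field_simp
  rw [hcoef]
  exact rpow_key (1 / p) hα0 hα1 t₀ ht₀ t ht
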